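/- Let Γ be a countable group, 𝒢 a family of subgroups containing the trivial subgroup, and suppose there exists a map μ : Γ → Prob(Γ) with lim_{k→∞/𝒢} ‖μ(gkh) − g·μ(k)‖₁ = 0 for all g, h ∈ Γ. Then there exists a map c : Γ → ℓ²_ℝ(Γ) that is proper relative to 𝒢 and satisfies sup_{k∈Γ} ‖c(gkh) − λ_g c(k)‖₂ < ∞ for all g, h ∈ Γ. -/

import Mathlib

/-- A subset `F ⊆ G` is small relative to a family `𝒢` of subgroups of `G` if it is contained
in a finite union of sets of the form `g Σ h` with `g, h ∈ G` and `Σ ∈ 𝒢`. -/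
def SmallRel {G : Type*} [Group G] (𝒢 : Set (Subgroup G)) (F : Set G) : Prop :=
  ∃ (n : ℕ) (g h : Fin n → G) (S : Fin n → Subgroup G),
    (∀ i, S i ∈ 𝒢) ∧ F ⊆ ⋃ i, (fun x => g i * x * h i) '' (S i : Set G)

/-! Enumerate `Γ` as `e 0, e 1, …` and exhaust it by an increasing sequence of small sets `C n`,
where `C (n + 1)` contains `e i * C n * e j` and the set of `k` at which the defect
`‖√μ(e_i k e_j) - λ_{e_i} √μ(k)‖₂` exceeds `2⁻ⁿ`, for all `i, j ≤ n`. The height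
`N k = min {n | k ∈ C n}` is then proper and moves by a bounded amount under two-sided
translations, and `c k = N k • √μ(k)` works: `‖c(gkh) - λ_g c(k)‖₂` is at most
`|N(gkh) - N(k)| + N(k) ‖√μ(gkh) - λ_g √μ(k)‖₂`, and once `N k` is large the last norm is
at most `2^(2 - N k)`. The `ℓ¹` hypothesis controls the `ℓ²` defect because
`(√a - √b)² ≤ |a - b|`. -/

namespace SmallRel

variable {G : Type*} [Group G] {𝒢 : Set (Subgroup G)}

theorem mono {F F' : Set G} (h : SmallRel 𝒢 F') (hF : F ⊆ F') : SmallRel 𝒢 F :=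
  let ⟨n, g, k, S, hS, hcov⟩ := h
  ⟨n, g, k, S, hS, hF.trans hcov⟩

theorem empty : SmallRel 𝒢 (∅ : Set G) :=
  ⟨0, finZeroElim, finZeroElim, finZeroElim, finZeroElim, Set.empty_subset _⟩

theorem union {F F' : Set G} (h : SmallRel 𝒢 F) (h' : SmallRel 𝒢 F') :
    SmallRel 𝒢 (F ∪ F') := by
  obtain ⟨n, g, k, S, hS, hcov⟩ := h
  obtain ⟨n', g', k', S', hS', hcov'⟩ := h'
  refine ⟨n + n', Fin.append g g', Fin.append k k', Fin.append S S',
    Fin.addCases (by simpa using hS) (by simpa using hS'), ?_⟩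
  rintro x (hx | hx)
  · obtain ⟨i, hi⟩ := Set.mem_iUnion.1 (hcov hx)
    exact Set.mem_iUnion.2 ⟨Fin.castAdd n' i, by simpa using hi⟩
  · obtain ⟨i, hi⟩ := Set.mem_iUnion.1 (hcov' hx)
    exact Set.mem_iUnion.2 ⟨Fin.natAdd n i, by simpa using hi⟩

theorem biUnion {ι : Type*} {s : Set ι} (hs : s.Finite) {F : ι → Set G}
    (h : ∀ i ∈ s, SmallRel 𝒢 (F i)) : SmallRel 𝒢 (⋃ i ∈ s, F i) := by
  induction s, hs using Set.Finite.induction_on with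
  | empty => simpa using empty
  | insert _ _ ih =>
    rw [Set.biUnion_insert]
    exact (h _ (Set.mem_insert _ _)).union (ih fun i hi => h i (Set.mem_insert_of_mem _ hi))

theorem singleton (htriv : ⊥ ∈ 𝒢) (x : G) : SmallRel 𝒢 {x} :=
  ⟨1, fun _ => x, fun _ => 1, fun _ => ⊥, fun _ => htriv, by simp⟩

theorem image_mul_mul {F : Set G} (h : SmallRel 𝒢 F) (a b : G) :
    SmallRel 𝒢 ((fun x => a * x * b) '' F) := by
  obtain ⟨n, g, k, S, hS, hcov⟩ := h
  refine ⟨n, fun i => a * g i, fun i => k i * b, S, hS, ?_⟩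
  rintro _ ⟨x, hx, rfl⟩
  obtain ⟨i, t, ht, rfl⟩ := Set.mem_iUnion.1 (hcov hx)
  exact Set.mem_iUnion.2 ⟨i, t, ht, by simp only [mul_assoc]⟩

end SmallRel

section Height

variable {Γ : Type*} [Group Γ] (e : ℕ → Γ) (B : Γ → Γ → ℕ → Set Γ)

def exhaustion : ℕ → Set Γ
  | 0 => ∅
  | n + 1 => exhaustion n ∪ {e n} ∪
      ⋃ i ≤ n, ⋃ j ≤ n, B (e i) (e j) n ∪ (fun x => e i * x * e j) '' exhaustion n

noncomputable def height (k : Γ) : ℕ := sInf {n | k ∈ exhaustion e B n}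

theorem exhaustion_mono : Monotone (exhaustion e B) :=
  monotone_nat_of_le_succ fun _ _ hx => Or.inl (Or.inl hx)

theorem apply_mem_exhaustion_succ (n : ℕ) : e n ∈ exhaustion e B (n + 1) :=
  Or.inl (Or.inr rfl)

variable {e B}

theorem mem_exhaustion_succ_of_mem {i j n : ℕ} (hi : i ≤ n) (hj : j ≤ n) {k : Γ}
    (hk : k ∈ B (e i) (e j) n) : k ∈ exhaustion e B (n + 1) :=
  Or.inr (Set.mem_biUnion hi (Set.mem_biUnion hj (Or.inl hk)))

theorem mul_mem_exhaustion_succ {i j n : ℕ} (hi : i ≤ n) (hj : j ≤ n) {k : Γ}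
    (hk : k ∈ exhaustion e B n) : e i * k * e j ∈ exhaustion e B (n + 1) :=
  Or.inr (Set.mem_biUnion hi (Set.mem_biUnion hj (Or.inr ⟨k, hk, rfl⟩)))

theorem smallRel_exhaustion {𝒢 : Set (Subgroup Γ)} (htriv : ⊥ ∈ 𝒢)
    (hB : ∀ g h n, SmallRel 𝒢 (B g h n)) (n : ℕ) : SmallRel 𝒢 (exhaustion e B n) := by
  induction n with
  | zero => exact SmallRel.empty
  | succ n ih =>
    refine (ih.union (SmallRel.singleton htriv _)).union
      (SmallRel.biUnion (Set.finite_Iic n) fun i _ => SmallRel.biUnion (Set.finite_Iic n)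
        fun j _ => (hB _ _ n).union (ih.image_mul_mul _ _))

theorem height_le_iff (he : Function.Surjective e) {k : Γ} {n : ℕ} :
    height e B k ≤ n ↔ k ∈ exhaustion e B n := by
  refine ⟨fun hn => exhaustion_mono e B hn (Nat.sInf_mem (s := {n | k ∈ exhaustion e B n}) ?_),
    fun hk => Nat.sInf_le hk⟩
  obtain ⟨i, rfl⟩ := he k
  exact ⟨i + 1, apply_mem_exhaustion_succ e B i⟩

theorem exists_height_mul_mul_le (he : Function.Surjective e) (g h : Γ) :
    ∃ m, ∀ k, height e B (g * k * h) ≤ height e B k + m := by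
  obtain ⟨⟨i, rfl⟩, ⟨j, rfl⟩⟩ := And.intro (he g) (he h)
  refine ⟨max i j + 1, fun k => (height_le_iff he).2
    (mul_mem_exhaustion_succ (n := height e B k + max i j) (by omega) (by omega)
      (exhaustion_mono e B (by omega) ((height_le_iff he).1 le_rfl)))⟩

end Height

theorem exists_height {Γ : Type*} [Group Γ] [Countable Γ] {𝒢 : Set (Subgroup Γ)}
    (htriv : ⊥ ∈ 𝒢) (B : Γ → Γ → ℕ → Set Γ) (hB : ∀ g h n, SmallRel 𝒢 (B g h n)) :
    ∃ N : Γ → ℕ, (∀ n, SmallRel 𝒢 {k | N k ≤ n}) ∧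
      (∀ g h, ∃ m : ℕ, ∀ k, |(N (g * k * h) : ℝ) - N k| ≤ m) ∧
      (∀ g h, ∃ m, ∀ n ≥ m, ∀ k ∈ B g h n, N k ≤ n + 1) := by
  obtain ⟨e, he⟩ := exists_surjective_nat Γ
  refine ⟨height e B, fun n => (smallRel_exhaustion htriv hB n).mono fun _ =>
    (height_le_iff he).1, fun g h => ?_, fun g h => ?_⟩
  · obtain ⟨m, hm⟩ := exists_height_mul_mul_le (B := B) he g h
    obtain ⟨m', hm'⟩ := exists_height_mul_mul_le (B := B) he g⁻¹ h⁻¹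
    refine ⟨max m m', fun k => abs_sub_le_iff.2 ⟨?_, ?_⟩⟩ <;> rw [sub_le_iff_le_add']
    · exact_mod_cast (hm k).trans (by omega)
    · have := hm' (g * k * h)
      rw [show g⁻¹ * (g * k * h) * h⁻¹ = k by group] at this
      exact_mod_cast this.trans (by omega)
  · obtain ⟨⟨i, rfl⟩, ⟨j, rfl⟩⟩ := And.intro (he g) (he h)
    exact ⟨max i j, fun n hn k hk => (height_le_iff he).2
      (mem_exhaustion_succ_of_mem (by omega) (by omega) hk)⟩

theorem sq_sqrt_sub_sqrt_le_abs_sub {a b : ℝ} (ha : 0 ≤ a) (hb : 0 ≤ b) :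
    (√a - √b) ^ 2 ≤ |a - b| := by
  rcases le_total a b with h | h
  · rw [abs_of_nonpos (by linarith)]
    nlinarith [Real.sq_sqrt ha, Real.sq_sqrt hb, Real.sqrt_le_sqrt h, Real.sqrt_nonneg a]
  · rw [abs_of_nonneg (by linarith)]
    nlinarith [Real.sq_sqrt ha, Real.sq_sqrt hb, Real.sqrt_le_sqrt h, Real.sqrt_nonneg b]

section SqrtLp

variable {α : Type*}

theorem lp.hasSum_sq (f : lp (fun _ : α => ℝ) 2) : HasSum (fun s => f s ^ 2) (‖f‖ ^ 2) := by
  simpa [real_inner_self_eq_norm_sq, sq] using lp.hasSum_inner (𝕜 := ℝ) f f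

theorem lp.sqrt_tsum_sq (f : lp (fun _ : α => ℝ) 2) : √(∑' s, f s ^ 2) = ‖f‖ := by
  rw [(lp.hasSum_sq f).tsum_eq, Real.sqrt_sq (norm_nonneg f)]

theorem memℓp_two_of_summable_sq {f : α → ℝ} (hf : Summable fun s => f s ^ 2) : Memℓp f 2 :=
  memℓp_gen (by simpa using hf)

noncomputable def sqrtLp (p : α → ℝ) (hp : 0 ≤ p) (hps : Summable p) : lp (fun _ : α => ℝ) 2 :=
  ⟨fun s => √(p s), memℓp_two_of_summable_sq (by simpa [Real.sq_sqrt (hp _)] using hps)⟩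

variable {p q : α → ℝ} (hp : 0 ≤ p) (hps : Summable p) (hq : 0 ≤ q) (hqs : Summable q)

@[simp]
theorem sqrtLp_apply (s : α) : sqrtLp p hp hps s = √(p s) := rfl

theorem norm_sqrtLp : ‖sqrtLp p hp hps‖ = √(∑' s, p s) := by
  simp [← lp.sqrt_tsum_sq, Real.sq_sqrt (hp _)]

theorem norm_sqrtLp_sub_sq_le :
    ‖sqrtLp p hp hps - sqrtLp q hq hqs‖ ^ 2 ≤ ∑' s, |p s - q s| := by
  refine (lp.hasSum_sq _).tsum_eq ▸ (lp.hasSum_sq _).summable.tsum_le_tsum (fun s => ?_)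
    (hps.sub hqs).abs
  simpa using sq_sqrt_sub_sqrt_le_abs_sub (hp s) (hq s)

end SqrtLp

section Defect

variable {Γ : Type*} [Group Γ] (μ : Γ → Γ → ℝ) (hμ : ∀ k s, 0 ≤ μ k s)
  (hμs : ∀ k, Summable (μ k))

/-- `λ_g √(μ k)`. -/
noncomputable def sqrtTranslate (g k : Γ) : lp (fun _ : Γ => ℝ) 2 :=
  sqrtLp (fun s => μ k (g⁻¹ * s)) (fun _ => hμ k _)
    ((hμs k).comp_injective (mul_right_injective _))

noncomputable def defect (g h k : Γ) : ℝ :=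
  ‖sqrtTranslate μ hμ hμs 1 (g * k * h) - sqrtTranslate μ hμ hμs g k‖

theorem norm_sqrtTranslate (hμ1 : ∀ k, ∑' s, μ k s = 1) (g k : Γ) :
    ‖sqrtTranslate μ hμ hμs g k‖ = 1 := by
  rw [sqrtTranslate, norm_sqrtLp, ← Real.sqrt_one, ← hμ1 k]
  exact congrArg _ ((Equiv.mulLeft g⁻¹).tsum_eq (μ k))

theorem defect_le_two (hμ1 : ∀ k, ∑' s, μ k s = 1) (g h k : Γ) :
    defect μ hμ hμs g h k ≤ 2 :=
  (norm_sub_le _ _).trans_eq <| by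
    rw [norm_sqrtTranslate _ _ _ hμ1, norm_sqrtTranslate _ _ _ hμ1]; norm_num

theorem defect_sq_le (g h k : Γ) :
    defect μ hμ hμs g h k ^ 2 ≤ ∑' s, |μ (g * k * h) s - μ k (g⁻¹ * s)| :=
  (norm_sqrtLp_sub_sq_le _ _ _ _).trans_eq (by simp only [inv_one, one_mul])

theorem smallRel_defect_gt {𝒢 : Set (Subgroup Γ)}
    (hconv : ∀ g h : Γ, ∀ ε > (0 : ℝ),
      SmallRel 𝒢 {k | ε < ∑' s, |μ (g * k * h) s - μ k (g⁻¹ * s)|})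
    (g h : Γ) {ε : ℝ} (hε : 0 < ε) : SmallRel 𝒢 {k | ε < defect μ hμ hμs g h k} :=
  (hconv g h (ε ^ 2) (by positivity)).mono fun _ hk =>
    (pow_lt_pow_left₀ hk hε.le two_ne_zero).trans_le (defect_sq_le μ hμ hμs g h _)

end Defect

theorem norm_smul_sub_smul_le {E : Type*} [SeminormedAddCommGroup E] [NormedSpace ℝ E]
    {x y : E} (hx : ‖x‖ = 1) (a : ℝ) {b : ℝ} (hb : 0 ≤ b) :
    ‖a • x - b • y‖ ≤ |a - b| + b * ‖x - y‖ := by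
  calc ‖a • x - b • y‖ = ‖(a - b) • x + b • (x - y)‖ := by
        rw [sub_smul, smul_sub]; abel_nf
    _ ≤ |a - b| + b * ‖x - y‖ := by
        refine (norm_add_le _ _).trans_eq ?_
        rw [norm_smul, norm_smul, hx, Real.norm_eq_abs, Real.norm_of_nonneg hb, mul_one]

theorem natCast_mul_le_of_le_half_pow {n m : ℕ} {d : ℝ} (hd0 : 0 ≤ d) (hd2 : d ≤ 2)
    (hdecay : ∀ j ≥ m, j + 2 ≤ n → d ≤ (1 / 2) ^ j) : n * d ≤ 2 * m + 2 := by
  rcases le_or_gt n (m + 1) with hn | hn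
  · calc (n : ℝ) * d ≤ (m + 1) * 2 := mul_le_mul (by exact_mod_cast hn) hd2 hd0 (by positivity)
      _ = 2 * m + 2 := by ring
  · obtain ⟨j, rfl⟩ : ∃ j, n = j + 2 := ⟨n - 2, by omega⟩
    have hj : ((j + 2 : ℕ) : ℝ) ≤ 2 * 2 ^ j := by
      rw [← pow_succ']; exact_mod_cast Nat.lt_two_pow_self
    calc ((j + 2 : ℕ) : ℝ) * d ≤ (2 * 2 ^ j) * (1 / 2) ^ j :=
          mul_le_mul hj (hdecay j (by omega) le_rfl) hd0 (by positivity)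
      _ = 2 := by rw [mul_assoc, ← mul_pow]; norm_num
      _ ≤ 2 * m + 2 := by linarith [(Nat.cast_nonneg m : (0 : ℝ) ≤ m)]

/-- If there is `μ : Γ → Prob(Γ)` with `lim_{k→∞/𝒢} ‖μ(gkh) - g·μ(k)‖₁ = 0` for all
`g, h ∈ Γ`, then there is a map `c : Γ → ℓ²_ℝ(Γ)` that is proper relative to `𝒢` and
satisfies `sup_k ‖c(gkh) - λ_g c(k)‖₂ < ∞` for all `g, h ∈ Γ`. -/
theorem exists_proper_quasi_cocycle {Γ : Type*} [Group Γ] [Countable Γ]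
    (𝒢 : Set (Subgroup Γ)) (htriv : ⊥ ∈ 𝒢)
    (μ : Γ → Γ → ℝ)
    (hprob : ∀ k, (∀ s, 0 ≤ μ k s) ∧ Summable (μ k) ∧ ∑' s, μ k s = 1)
    (hconv : ∀ g h : Γ, ∀ ε > (0 : ℝ),
      SmallRel 𝒢 {k | ε < ∑' s, |μ (g * k * h) s - μ k (g⁻¹ * s)|}) :
    ∃ c : Γ → lp (fun _ : Γ => ℝ) 2,
      (∀ κ > (0 : ℝ), SmallRel 𝒢 {k | ‖c k‖ < κ}) ∧
      (∀ g h : Γ, ∃ C : ℝ, ∀ k : Γ,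
        Real.sqrt (∑' s, (c (g * k * h) s - c k (g⁻¹ * s)) ^ 2) ≤ C) := by
  have hμ : ∀ k s, 0 ≤ μ k s := fun k => (hprob k).1
  have hμs : ∀ k, Summable (μ k) := fun k => (hprob k).2.1
  have hμ1 : ∀ k, ∑' s, μ k s = 1 := fun k => (hprob k).2.2
  have hξ := norm_sqrtTranslate μ hμ hμs hμ1
  obtain ⟨N, hN_proper, hN_coarse, hN_defect⟩ := exists_height htriv
    (fun g h n => {k | (1 / 2 : ℝ) ^ n < defect μ hμ hμs g h k})
    (fun g h n => smallRel_defect_gt μ hμ hμs hconv g h (by positivity))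
  set ξ := sqrtTranslate μ hμ hμs
  refine ⟨fun k => (N k : ℝ) • ξ 1 k, fun κ _ => (hN_proper ⌈κ⌉₊).mono fun k hk => ?_,
    fun g h => ?_⟩
  · have hk : (N k : ℝ) < κ := by simpa [norm_smul, hξ] using hk
    exact (Nat.lt_ceil.2 hk).le
  obtain ⟨m, hm⟩ := hN_coarse g h
  obtain ⟨m', hm'⟩ := hN_defect g h
  refine ⟨m + (2 * m' + 2), fun k => ?_⟩
  calc √(∑' s, (((N (g * k * h) : ℝ) • ξ 1 (g * k * h)) s - ((N k : ℝ) • ξ 1 k) (g⁻¹ * s)) ^ 2)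
      = ‖(N (g * k * h) : ℝ) • ξ 1 (g * k * h) - (N k : ℝ) • ξ g k‖ := by
        rw [← lp.sqrt_tsum_sq]
        simp only [ξ, sqrtTranslate, lp.coeFn_sub, lp.coeFn_smul, Pi.sub_apply, Pi.smul_apply,
          sqrtLp_apply, smul_eq_mul, inv_one, one_mul]
    _ ≤ |(N (g * k * h) : ℝ) - N k| + N k * defect μ hμ hμs g h k :=
        norm_smul_sub_smul_le (hξ 1 _) _ (Nat.cast_nonneg _)
    _ ≤ m + (2 * m' + 2) := add_le_add (hm k) <|
        natCast_mul_le_of_le_half_pow (norm_nonneg _) (defect_le_two μ hμ hμs hμ1 g h k)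
          fun j hj hjk => not_lt.1 fun hlt => by have := hm' j hj k hlt; omega
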